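/- Deterministic prediction bound (core of Theorem 1): under the same hypotheses as the deterministic ℓ2 estimation bound — β̂ a global minimizer of L(β) + λ‖β‖₁ with λ > 0, β* supported on S with |S| = s ≥ 1, λ ≥ 2‖ξ‖_∞, restricted strong convexity Δᵀ G Δ ≥ α‖Δ‖₂² − κ‖Δ‖₁² on the cone ‖Δ_{S^c}‖₁ ≤ 3‖Δ_S‖₁ with α > 0, κ ≥ 0, and 16 κ s ≤ α/2 — one has (1/N) ‖W̃^{1/2} X (β̂ − β*)‖₂² ≤ 18 λ² s / α, where W̃^{1/2} is the positive semidefinite square root of W̃. -/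

import Mathlib

/-!
Write `Δ = β̂ - β*` and `q = Δᵀ G Δ`, which equals the prediction error. Expanding the quadratic
loss around `β*` gives `L β̂ = L β* + q / 2 + ξ ⬝ Δ`; comparing the penalised objective at `β̂` and
`β*`, bounding `ξ ⬝ Δ` by Hölder and using that `β*` vanishes off `S` yields the basic inequality
`q ≤ 3λ‖Δ_S‖₁ - λ‖Δ_{Sᶜ}‖₁`. Since `q ≥ 0`, `Δ` lies in the cone, so restricted strong convexity
applies; with `‖Δ‖₁ ≤ 4‖Δ_S‖₁`, Cauchy–Schwarz `‖Δ_S‖₁² ≤ s‖Δ‖₂²` and `16κs ≤ α/2` it gives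
`q ≥ (α/2)‖Δ‖₂²`. Together with `q² ≤ 9λ²‖Δ_S‖₁² ≤ 9λ²s‖Δ‖₂²` this forces `q ≤ 18λ²s/α`.
-/

open Matrix

open scoped ComplexOrder in
/-- The positive semidefinite square root of a positive semidefinite matrix
(the definition `Matrix.PosSemidef.sqrt` of the older Mathlib, since removed). -/
noncomputable def Matrix.PosSemidef.sqrt {n : Type*} [Fintype n] [DecidableEq n]
    {𝕜 : Type*} [RCLike 𝕜] {A : Matrix n n 𝕜} (hA : A.PosSemidef) : Matrix n n 𝕜 :=
  hA.1.eigenvectorUnitary.1 * diagonal ((↑) ∘ (Real.sqrt ∘ hA.1.eigenvalues)) *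
  (star hA.1.eigenvectorUnitary : Matrix n n 𝕜)

open scoped ComplexOrder

namespace Matrix.PosSemidef

variable {n 𝕜 : Type*} [Fintype n] [DecidableEq n] [RCLike 𝕜] {A : Matrix n n 𝕜}

theorem sqrt_isHermitian (hA : A.PosSemidef) : hA.sqrt.IsHermitian := by
  simp only [IsHermitian, PosSemidef.sqrt, conjTranspose_mul, conjTranspose_conjTranspose,
    diagonal_conjTranspose, star_eq_conjTranspose, Matrix.mul_assoc]
  congr 3
  ext i
  simp

theorem sqrt_mul_self (hA : A.PosSemidef) : hA.sqrt * hA.sqrt = A := by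
  unfold Matrix.PosSemidef.sqrt
  have hU : (star hA.1.eigenvectorUnitary : Matrix n n 𝕜) * hA.1.eigenvectorUnitary.1 = 1 :=
    Unitary.star_mul_self_of_mem hA.1.eigenvectorUnitary.2
  conv_rhs => rw [hA.1.spectral_theorem]
  simp only [Matrix.mul_assoc]
  rw [← Matrix.mul_assoc _ _ (diagonal _ * _), hU, Matrix.one_mul, ← Matrix.mul_assoc (diagonal _),
    diagonal_mul_diagonal, Unitary.conjStarAlgAut_apply, Matrix.mul_assoc]
  congr 3
  funext i
  simp [← RCLike.ofReal_mul, Real.mul_self_sqrt (hA.eigenvalues_nonneg i)]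

theorem sum_sq_sqrt_mulVec {A : Matrix n n ℝ} (hA : A.PosSemidef) (v : n → ℝ) :
    ∑ i, (hA.sqrt *ᵥ v) i ^ 2 = v ⬝ᵥ (A *ᵥ v) := by
  have hsymm : hA.sqrtᵀ = hA.sqrt := (isHermitian_iff_isSymm.mp hA.sqrt_isHermitian).eq
  calc ∑ i, (hA.sqrt *ᵥ v) i ^ 2 = v ⬝ᵥ hA.sqrtᵀ *ᵥ (hA.sqrt *ᵥ v) := by
        rw [dotProduct_transpose_mulVec]; simp only [dotProduct, sq]
    _ = v ⬝ᵥ (A *ᵥ v) := by rw [hsymm, mulVec_mulVec, hA.sqrt_mul_self]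

end Matrix.PosSemidef

section WeightedLeastSquares

variable {m ι : Type*} [Fintype m] [Fintype ι]

theorem transpose_mulVec_dotProduct (X : Matrix m ι ℝ) (u : m → ℝ) (d : ι → ℝ) :
    (Xᵀ *ᵥ u) ⬝ᵥ d = u ⬝ᵥ (X *ᵥ d) := by
  rw [mulVec_transpose, dotProduct_mulVec]

theorem dotProduct_transpose_mul_mul_mulVec (X : Matrix m ι ℝ) (W : Matrix m m ℝ) (Δ : ι → ℝ) :
    Δ ⬝ᵥ ((Xᵀ * W * X) *ᵥ Δ) = (X *ᵥ Δ) ⬝ᵥ (W *ᵥ (X *ᵥ Δ)) := by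
  rw [← mulVec_mulVec, ← mulVec_mulVec, dotProduct_comm, transpose_mulVec_dotProduct,
    dotProduct_comm]

theorem weighted_loss_expansion (c : ℝ) {W : Matrix m m ℝ} (hW : W.IsSymm) (X : Matrix m ι ℝ)
    (Y : m → ℝ) (b b' : ι → ℝ) :
    c / 2 * ((Y - X *ᵥ b') ⬝ᵥ (W *ᵥ (Y - X *ᵥ b'))) =
      c / 2 * ((Y - X *ᵥ b) ⬝ᵥ (W *ᵥ (Y - X *ᵥ b)))
        + (b' - b) ⬝ᵥ ((c • (Xᵀ * W * X)) *ᵥ (b' - b)) / 2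
        + ((-c) • (Xᵀ *ᵥ (W *ᵥ (Y - X *ᵥ b)))) ⬝ᵥ (b' - b) := by
  set r := Y - X *ᵥ b
  set v := X *ᵥ (b' - b)
  have hres : Y - X *ᵥ b' = r - v := by simp only [r, v, mulVec_sub]; abel
  have hcross : r ⬝ᵥ (W *ᵥ v) = v ⬝ᵥ (W *ᵥ r) := by
    rw [← hW.eq, dotProduct_transpose_mulVec, hW.eq]
  have hquad : (b' - b) ⬝ᵥ ((c • (Xᵀ * W * X)) *ᵥ (b' - b)) = c * (v ⬝ᵥ (W *ᵥ v)) := by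
    rw [smul_mulVec, dotProduct_smul, dotProduct_transpose_mul_mul_mulVec, smul_eq_mul]
  have hlin : ((-c) • (Xᵀ *ᵥ (W *ᵥ r))) ⬝ᵥ (b' - b) = -c * (v ⬝ᵥ (W *ᵥ r)) := by
    rw [smul_dotProduct, transpose_mulVec_dotProduct, dotProduct_comm, smul_eq_mul]
  rw [hres, hquad, hlin]
  simp only [mulVec_sub, sub_dotProduct, dotProduct_sub, hcross]
  ring

end WeightedLeastSquares

section Lasso

open Finset

variable {ι : Type*} [Fintype ι]

theorem abs_dotProduct_le_norm_mul_sum_abs (ξ Δ : ι → ℝ) : |ξ ⬝ᵥ Δ| ≤ ‖ξ‖ * ∑ j, |Δ j| :=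
  calc |ξ ⬝ᵥ Δ| ≤ ∑ j, |ξ j| * |Δ j| := by
        simpa only [dotProduct, abs_mul] using abs_sum_le_sum_abs (fun j ↦ ξ j * Δ j) univ
    _ ≤ ∑ j, ‖ξ‖ * |Δ j| := by
        gcongr with j
        exact norm_le_pi_norm ξ j
    _ = ‖ξ‖ * ∑ j, |Δ j| := (mul_sum ..).symm

variable [DecidableEq ι]

theorem sum_abs_sub_sum_abs_le_of_support {S : Finset ι} {βstar β : ι → ℝ}
    (hsupp : ∀ j ∉ S, βstar j = 0) :
    ∑ j, |βstar j| - ∑ j, |β j| ≤ ∑ j ∈ S, |(β - βstar) j| - ∑ j ∈ Sᶜ, |(β - βstar) j| := by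
  have hoff : ∑ j ∈ Sᶜ, |βstar j| = 0 :=
    sum_eq_zero fun j hj ↦ by rw [hsupp j (mem_compl.mp hj), abs_zero]
  have hoff' : ∑ j ∈ Sᶜ, |(β - βstar) j| = ∑ j ∈ Sᶜ, |β j| :=
    sum_congr rfl fun j hj ↦ by rw [Pi.sub_apply, hsupp j (mem_compl.mp hj), sub_zero]
  have hon : ∑ j ∈ S, |βstar j| - ∑ j ∈ S, |β j| ≤ ∑ j ∈ S, |(β - βstar) j| := by
    rw [← sum_sub_distrib]
    exact sum_le_sum fun j _ ↦ by
      rw [Pi.sub_apply, abs_sub_comm]; exact abs_sub_abs_le_abs_sub _ _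
  rw [← sum_add_sum_compl S fun j ↦ |βstar j|, ← sum_add_sum_compl S fun j ↦ |β j|, hoff, hoff']
  linarith

theorem lasso_basic_inequality {F : (ι → ℝ) → ℝ} {βstar βhat ξ : ι → ℝ} {S : Finset ι}
    {lam q : ℝ} (hmin : F βhat + lam * ∑ j, |βhat j| ≤ F βstar + lam * ∑ j, |βstar j|)
    (hexp : F βhat = F βstar + q / 2 + ξ ⬝ᵥ (βhat - βstar)) (hξ : 2 * ‖ξ‖ ≤ lam)
    (hsupp : ∀ j ∉ S, βstar j = 0) :
    q ≤ 3 * lam * ∑ j ∈ S, |(βhat - βstar) j| - lam * ∑ j ∈ Sᶜ, |(βhat - βstar) j| := by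
  set Δ := βhat - βstar
  have hl1 := sum_abs_sub_sum_abs_le_of_support (β := βhat) hsupp
  have hscore : -(ξ ⬝ᵥ Δ) ≤ lam / 2 * (∑ j ∈ S, |Δ j| + ∑ j ∈ Sᶜ, |Δ j|) :=
    calc -(ξ ⬝ᵥ Δ) ≤ ‖ξ‖ * ∑ j, |Δ j| :=
          (neg_le_abs _).trans (abs_dotProduct_le_norm_mul_sum_abs ξ Δ)
      _ ≤ lam / 2 * (∑ j ∈ S, |Δ j| + ∑ j ∈ Sᶜ, |Δ j|) := by
          rw [sum_add_sum_compl]; gcongr; linarith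
  linarith [mul_le_mul_of_nonneg_left hl1 (show 0 ≤ lam by linarith [norm_nonneg ξ])]

theorem le_two_mul_div_of_sq_le_mul {q a c e : ℝ} (hq : 0 ≤ q) (ha : 0 < a) (hc : 0 ≤ c)
    (hsq : q ^ 2 ≤ c * e) (hcurv : a / 2 * e ≤ q) : q ≤ 2 * c / a := by
  rw [le_div_iff₀ ha]
  rcases hq.eq_or_lt with rfl | hqpos
  · rw [zero_mul]; positivity
  refine le_of_mul_le_mul_right ?_ hqpos
  calc q * a * q = a * q ^ 2 := by ring
    _ ≤ a * (c * e) := by gcongr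
    _ = 2 * c * (a / 2 * e) := by ring
    _ ≤ 2 * c * q := by gcongr

theorem lasso_quadratic_bound {S : Finset ι} {Δ : ι → ℝ} {q lam α κ : ℝ} (hlam : 0 < lam)
    (hα : 0 < α) (hκ : 0 ≤ κ) (hq : 0 ≤ q)
    (hbasic : q ≤ 3 * lam * ∑ j ∈ S, |Δ j| - lam * ∑ j ∈ Sᶜ, |Δ j|)
    (hRSC : ∑ j ∈ Sᶜ, |Δ j| ≤ 3 * ∑ j ∈ S, |Δ j| →
      α * ∑ j, Δ j ^ 2 - κ * (∑ j, |Δ j|) ^ 2 ≤ q)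
    (hκS : 16 * κ * #S ≤ α / 2) :
    q ≤ 18 * lam ^ 2 * #S / α := by
  set tS := ∑ j ∈ S, |Δ j|
  set tC := ∑ j ∈ Sᶜ, |Δ j|
  set e := ∑ j, Δ j ^ 2
  have htC : 0 ≤ tC := sum_nonneg fun j _ ↦ abs_nonneg _
  have hcone : tC ≤ 3 * tS := le_of_mul_le_mul_left (by linarith) hlam
  have hCS : tS ^ 2 ≤ #S * e := by
    refine sq_sum_le_card_mul_sum_sq.trans ?_
    simp only [sq_abs]
    gcongr
    exact sum_le_sum_of_subset_of_nonneg (subset_univ S) fun j _ _ ↦ sq_nonneg _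
  have hcurv : α / 2 * e ≤ q := by
    have ht : ∑ j, |Δ j| ≤ 4 * tS := by rw [← sum_add_sum_compl S]; linarith
    have hκt : κ * (∑ j, |Δ j|) ^ 2 ≤ α / 2 * e :=
      calc κ * (∑ j, |Δ j|) ^ 2 ≤ κ * (4 * tS) ^ 2 := by gcongr
        _ = 16 * κ * tS ^ 2 := by ring
        _ ≤ 16 * κ * (#S * e) := by gcongr
        _ = 16 * κ * #S * e := by ring
        _ ≤ α / 2 * e := by gcongr
    linarith [hRSC hcone]
  have hsq : q ^ 2 ≤ 9 * lam ^ 2 * #S * e :=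
    calc q ^ 2 ≤ (3 * lam * tS) ^ 2 := by gcongr; linarith [mul_nonneg hlam.le htC]
      _ = 9 * lam ^ 2 * tS ^ 2 := by ring
      _ ≤ 9 * lam ^ 2 * (#S * e) := by gcongr
      _ = 9 * lam ^ 2 * #S * e := by ring
  calc q ≤ 2 * (9 * lam ^ 2 * #S) / α :=
        le_two_mul_div_of_sq_le_mul hq hα (by positivity) hsq hcurv
    _ = 18 * lam ^ 2 * #S / α := by ring

end Lasso

theorem deterministic_prediction_bound_general (N p s : ℕ)
    (X : Matrix (Fin N) (Fin p) ℝ)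
    (Wt : Matrix (Fin N) (Fin N) ℝ) (hWt : Wt.PosSemidef)
    (Y : Fin N → ℝ) (βstar : Fin p → ℝ)
    (L : (Fin p → ℝ) → ℝ)
    (hL : ∀ β, L β = (1 / (2 * (N : ℝ))) *
      ((Y - X *ᵥ β) ⬝ᵥ (Wt *ᵥ (Y - X *ᵥ β))))
    (ξ : Fin p → ℝ)
    (hξ : ξ = (-(1 / (N : ℝ))) • (Xᵀ *ᵥ (Wt *ᵥ (Y - X *ᵥ βstar))))
    (G : Matrix (Fin p) (Fin p) ℝ)
    (hG : G = (1 / (N : ℝ)) • (Xᵀ * Wt * X))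
    (S : Finset (Fin p)) (hcard : S.card = s)
    (hsupp : ∀ j ∉ S, βstar j = 0)
    (lam α κ : ℝ) (hlam : 0 < lam) (hα : 0 < α) (hκ : 0 ≤ κ)
    (hlamξ : 2 * ‖ξ‖ ≤ lam)
    (hRSC : ∀ Δ : Fin p → ℝ, (∑ j ∈ Sᶜ, |Δ j|) ≤ 3 * (∑ j ∈ S, |Δ j|) →
      α * (∑ j, (Δ j) ^ 2) - κ * (∑ j, |Δ j|) ^ 2 ≤ Δ ⬝ᵥ (G *ᵥ Δ))
    (hκs : 16 * κ * s ≤ α / 2)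
    (βhat : Fin p → ℝ)
    (hmin : ∀ β : Fin p → ℝ,
      L βhat + lam * (∑ j, |βhat j|) ≤ L β + lam * (∑ j, |β j|)) :
    (1 / (N : ℝ)) * (∑ i, ((hWt.sqrt *ᵥ (X *ᵥ (βhat - βstar))) i) ^ 2) ≤ 18 * lam ^ 2 * s / α := by
  subst hcard
  set Δ := βhat - βstar
  have hpred : (1 / (N : ℝ)) * ∑ i, (hWt.sqrt *ᵥ (X *ᵥ Δ)) i ^ 2 = Δ ⬝ᵥ (G *ᵥ Δ) := by
    rw [hWt.sum_sq_sqrt_mulVec, hG, smul_mulVec, dotProduct_smul,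
      dotProduct_transpose_mul_mul_mulVec, smul_eq_mul]
  have hexp : L βhat = L βstar + Δ ⬝ᵥ (G *ᵥ Δ) / 2 + ξ ⬝ᵥ Δ := by
    have hhalf : 1 / (2 * (N : ℝ)) = 1 / N / 2 := by ring
    simp only [hL, hG, hξ, hhalf]
    exact weighted_loss_expansion _ (isHermitian_iff_isSymm.mp hWt.1) X Y βstar βhat
  rw [hpred]
  exact lasso_quadratic_bound hlam hα hκ (hpred ▸ by positivity)
    (lasso_basic_inequality (hmin βstar) hexp hlamξ hsupp) (hRSC Δ) hκs

/-- Deterministic prediction bound (core of Theorem 1 of the paper).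
Let `L(β) = (1/(2N)) (Y − Xβ)ᵀ W̃ (Y − Xβ)` with score
`ξ = −(1/N) Xᵀ W̃ (Y − Xβ*)` and Gram matrix `G = (1/N) Xᵀ W̃ X`, and let `β̂`
be a global minimizer of `Q(β) = L(β) + λ‖β‖₁`.  If `β*` is supported on `S`
with `|S| = s ≥ 1`, `λ ≥ 2‖ξ‖_∞`, restricted strong convexity
`Δᵀ G Δ ≥ α‖Δ‖₂² − κ‖Δ‖₁²` holds on the cone `‖Δ_{S^c}‖₁ ≤ 3‖Δ_S‖₁` with
`α > 0`, `κ ≥ 0`, and `16κs ≤ α/2`, then `(1/N)‖W̃^{1/2} X (β̂ − β*)‖₂² ≤ 18λ²s/α`, where `W̃^{1/2}` is the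
positive semidefinite square root of `W̃`.
(The sup norm `‖ξ‖` below is the norm of the Pi type `Fin p → ℝ`.) -/
theorem deterministic_prediction_bound (N p s : ℕ) (hN : 0 < N) (hp : 0 < p)
    (X : Matrix (Fin N) (Fin p) ℝ)
    (Wt : Matrix (Fin N) (Fin N) ℝ) (hWt : Wt.PosSemidef)
    (Y : Fin N → ℝ) (βstar : Fin p → ℝ)
    (L : (Fin p → ℝ) → ℝ)
    (hL : ∀ β, L β = (1 / (2 * (N : ℝ))) *
      ((Y - X *ᵥ β) ⬝ᵥ (Wt *ᵥ (Y - X *ᵥ β))))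
    (ξ : Fin p → ℝ)
    (hξ : ξ = (-(1 / (N : ℝ))) • (Xᵀ *ᵥ (Wt *ᵥ (Y - X *ᵥ βstar))))
    (G : Matrix (Fin p) (Fin p) ℝ)
    (hG : G = (1 / (N : ℝ)) • (Xᵀ * Wt * X))
    (S : Finset (Fin p)) (hcard : S.card = s) (hs : 1 ≤ s)
    (hsupp : ∀ j ∉ S, βstar j = 0)
    (lam α κ : ℝ) (hlam : 0 < lam) (hα : 0 < α) (hκ : 0 ≤ κ)
    (hlamξ : 2 * ‖ξ‖ ≤ lam)
    (hRSC : ∀ Δ : Fin p → ℝ, (∑ j ∈ Sᶜ, |Δ j|) ≤ 3 * (∑ j ∈ S, |Δ j|) →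
      α * (∑ j, (Δ j) ^ 2) - κ * (∑ j, |Δ j|) ^ 2 ≤ Δ ⬝ᵥ (G *ᵥ Δ))
    (hκs : 16 * κ * s ≤ α / 2)
    (βhat : Fin p → ℝ)
    (hmin : ∀ β : Fin p → ℝ,
      L βhat + lam * (∑ j, |βhat j|) ≤ L β + lam * (∑ j, |β j|)) :
    (1 / (N : ℝ)) * (∑ i, ((hWt.sqrt *ᵥ (X *ᵥ (βhat - βstar))) i) ^ 2) ≤ 18 * lam ^ 2 * s / α :=
  deterministic_prediction_bound_general N p s X Wt hWt Y βstar L hL ξ hξ G hG S hcard hsupp lam α κ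
    hlam hα hκ hlamξ hRSC hκs βhat hmin
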